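/- arXiv:1306.4289 — 8 statements merged into one kernel-verified Lean document; each statement's English description precedes it below -/
import Mathlib

section
/- There exists a polyhedron P in ℝ² given by finitely many linear inequalities with integer coefficients and an integer point x ∈ P that is irreducible in P but is not a vertex (extreme point) of conv(P ∩ ℤ²). Concretely, for P = {x ∈ ℝ² : x₁ + x₂ ≥ 1, 2x₁ − x₂ ≤ 2, −x₁ + 2x₂ ≤ 2}, the point (1,1) is irreducible in P ∩ ℤ² but is not an extreme point of conv(P ∩ ℤ²). -/
def IsIntPt {n : ℕ} (x : Fin n → ℝ) : Prop := ∀ i, ∃ m : ℤ, x i = (m : ℝ)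

def IrreduciblePt {n : ℕ} (Q : Set (Fin n → ℝ)) (x : Fin n → ℝ) : Prop :=
  x ∈ Q ∧ IsIntPt x ∧
    ¬ ∃ y z : Fin n → ℝ, y ∈ Q ∧ z ∈ Q ∧ IsIntPt y ∧ IsIntPt z ∧ y ≠ z ∧
      x = (1 / 2 : ℝ) • (y + z)

/-- The polyhedron `P = {x ∈ ℝ² : x₁ + x₂ ≥ 1, 2x₁ − x₂ ≤ 2, −x₁ + 2x₂ ≤ 2}`. -/
def Pexample : Set (Fin 2 → ℝ) :=
  {x | 1 ≤ x 0 + x 1 ∧ 2 * x 0 - x 1 ≤ 2 ∧ -x 0 + 2 * x 1 ≤ 2}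

/-!
If `y`, `z` are lattice points of `P` with midpoint `(1, 1)`, then `y` and its reflection
`z = (2, 2) - y` both lie in `P`, and the six resulting integer inequalities force `y = (1, 1)`.
On the other hand `(1, 1)` is the centroid of the lattice points `(0, 1)`, `(1, 0)`, `(2, 2)` of `P`,
so it lies in the convex hull of the other lattice points and cannot be extreme.
-/

open Set

theorem notMem_extremePoints_convexHull_of_mem_convexHull_sdiff {𝕜 E : Type*} [Ring 𝕜]
    [LinearOrder 𝕜] [IsStrictOrderedRing 𝕜] [DenselyOrdered 𝕜] [AddCommGroup E] [Module 𝕜 E]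
    [Module.IsTorsionFree 𝕜 E] {s : Set E} {x : E} (hx : x ∈ convexHull 𝕜 (s \ {x})) :
    x ∉ (convexHull 𝕜 s).extremePoints 𝕜 := by
  rw [(convex_convexHull 𝕜 s).mem_extremePoints_iff_mem_sdiff_convexHull_sdiff]
  exact fun h => h.2 <| convexHull_mono (sdiff_subset_sdiff_left (subset_convexHull 𝕜 s)) hx

theorem IsIntPt.exists_eq_intCast {n : ℕ} {x : Fin n → ℝ} (hx : IsIntPt x) :
    ∃ m : Fin n → ℤ, x = fun i => (m i : ℝ) := by
  choose m hm using hx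
  exact ⟨m, funext hm⟩

theorem isIntPt_intCast {n : ℕ} (m : Fin n → ℤ) : IsIntPt fun i => (m i : ℝ) :=
  fun i => ⟨m i, rfl⟩

theorem intCast_mem_Pexample_iff (m : Fin 2 → ℤ) :
    (fun i => (m i : ℝ)) ∈ Pexample ↔ 1 ≤ m 0 + m 1 ∧ 2 * m 0 - m 1 ≤ 2 ∧ -m 0 + 2 * m 1 ≤ 2 := by
  simp only [Pexample, mem_ofPred_eq]
  norm_cast

theorem eq_of_intCast_mem_Pexample_of_add_eq_two {m k : Fin 2 → ℤ}
    (hm : (fun i => (m i : ℝ)) ∈ Pexample) (hk : (fun i => (k i : ℝ)) ∈ Pexample)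
    (hmk : m + k = 2) : m = k := by
  rw [intCast_mem_Pexample_iff] at hm hk
  have h0 := congrFun hmk 0
  have h1 := congrFun hmk 1
  simp only [Pi.add_apply, Pi.ofNat_apply] at h0 h1
  funext i
  fin_cases i <;> simp <;> omega

theorem irreduciblePt_one_Pexample : IrreduciblePt Pexample (fun _ => 1) := by
  refine ⟨⟨by norm_num, by norm_num, by norm_num⟩, fun _ => ⟨1, by norm_num⟩, ?_⟩
  rintro ⟨y, z, hy, hz, hyint, hzint, hne, hmid⟩
  obtain ⟨m, rfl⟩ := hyint.exists_eq_intCast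
  obtain ⟨k, rfl⟩ := hzint.exists_eq_intCast
  have hmk : m + k = 2 := by
    funext i
    have hi := congrFun hmid i
    simp only [Pi.smul_apply, Pi.add_apply, smul_eq_mul] at hi
    exact_mod_cast (by linarith : (m i : ℝ) + k i = 2)
  exact hne (by rw [eq_of_intCast_mem_Pexample_of_add_eq_two hy hz hmk])

theorem one_notMem_extremePoints_convexHull_Pexample :
    (fun _ => (1 : ℝ)) ∉ (convexHull ℝ {p ∈ Pexample | IsIntPt p}).extremePoints ℝ := by
  apply notMem_extremePoints_convexHull_of_mem_convexHull_sdiff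
  set C := convexHull ℝ ({p ∈ Pexample | IsIntPt p} \ {fun _ => 1})
  have hC : Convex ℝ C := convex_convexHull ℝ _
  have mem_C (m : Fin 2 → ℤ) (hm : 1 ≤ m 0 + m 1 ∧ 2 * m 0 - m 1 ≤ 2 ∧ -m 0 + 2 * m 1 ≤ 2)
      (hm1 : m ≠ 1) : (fun i => (m i : ℝ)) ∈ C := by
    refine subset_convexHull ℝ _ ⟨⟨(intCast_mem_Pexample_iff m).2 hm, isIntPt_intCast m⟩, ?_⟩
    exact fun h => hm1 (funext fun i => by exact_mod_cast congrFun h i)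
  have h_half : (fun _ => (1 / 2 : ℝ)) ∈ C := by
    refine hC.segment_subset (mem_C ![0, 1] (by decide) (by decide))
      (mem_C ![1, 0] (by decide) (by decide))
      ⟨1 / 2, 1 / 2, by norm_num, by norm_num, by norm_num, ?_⟩
    funext i
    fin_cases i <;> norm_num
  have h_two : (fun _ => (2 : ℝ)) ∈ C := by
    simpa using mem_C (fun _ => 2) (by decide) (by decide)
  refine hC.segment_subset h_half h_two ⟨2 / 3, 1 / 3, by norm_num, by norm_num, by norm_num, ?_⟩
  funext i
  norm_num

/-- The point `(1,1)` is irreducible in `P ∩ ℤ²` but is not a vertex (extreme point) of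
`conv (P ∩ ℤ²)`. -/
theorem irreducible_not_vertex_example :
    IrreduciblePt Pexample (fun _ => 1) ∧
      (fun _ => (1 : ℝ)) ∉
        Set.extremePoints ℝ (convexHull ℝ {p ∈ Pexample | IsIntPt p}) :=
  ⟨irreduciblePt_one_Pexample, one_notMem_extremePoints_convexHull_Pexample⟩
end

section
/- Let A ∈ ℤⁿˣⁿ be non-singular, b, c ∈ ℤⁿ with b < c componentwise, and let P(A,b,c) = {x ∈ ℝⁿ : b ≤ Ax ≤ c}. Then the number of irreducible points in P(A,b,c) ∩ ℤⁿ is at most 2·∏_{i=1}^{n−1} (3 + 2·log₂(1 + (cᵢ − bᵢ)/3)). -/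
/-- Label of the integer offset `t ∈ [0,d]` inside an interval of length `d`. -/
def lab (d t : ℤ) : ℤ :=
  if 3 * t < d then (Nat.log 2 (t + 1).toNat : ℤ) + 1
  else if 3 * (d - t) < d then -((Nat.log 2 (d - t + 1).toNat : ℤ) + 1)
  else 0

lemma log_facts {s : ℤ} (hs : 0 ≤ s) :
    ((2 ^ Nat.log 2 (s + 1).toNat : ℕ) : ℤ) ≤ s + 1 ∧
      s + 1 < 2 * ((2 ^ Nat.log 2 (s + 1).toNat : ℕ) : ℤ) := by
  have h0 : (s + 1).toNat ≠ 0 := by omega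
  have h1 := Nat.pow_log_le_self 2 h0
  have h2 := Nat.lt_pow_succ_log_self (by norm_num : 1 < 2) (s + 1).toNat
  rw [pow_succ] at h2
  omega

lemma lab_mid {d t t' : ℤ} (ht0 : 0 ≤ t) (htd : t ≤ d)
    (ht0' : 0 ≤ t') (htd' : t' ≤ d) (h : lab d t = lab d t') :
    0 ≤ 2 * t - t' ∧ 2 * t - t' ≤ d := by
  unfold lab at h
  split_ifs at h with h1 h1' h2' h1' h2 h2' h2 h2'
  · -- both left
    obtain ⟨e1, e2⟩ := log_facts ht0
    obtain ⟨e1', e2'⟩ := log_facts ht0'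
    have hk : Nat.log 2 (t + 1).toNat = Nat.log 2 (t' + 1).toNat := by omega
    rw [hk] at e1 e2
    omega
  · omega
  · omega
  · omega
  · -- both right
    have hk : Nat.log 2 (d - t + 1).toNat = Nat.log 2 (d - t' + 1).toNat := by omega
    obtain ⟨e1, e2⟩ := log_facts (s := d - t) (by omega)
    obtain ⟨e1', e2'⟩ := log_facts (s := d - t') (by omega)
    rw [hk] at e1 e2
    omega
  · omega
  · omega
  · omega
  · -- both middle
    omega

/-- One plus the logarithmic bound for the number of labels. -/
def Kd (d : ℤ) : ℤ := (Nat.log 2 ((d + 2).toNat / 3) : ℤ) + 1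

lemma lab_mem {d t : ℤ} (ht0 : 0 ≤ t) (htd : t ≤ d) :
    -(Kd d) ≤ lab d t ∧ lab d t ≤ Kd d := by
  have hmono : ∀ s : ℤ, 0 ≤ s → 3 * s < d →
      (Nat.log 2 (s + 1).toNat : ℤ) ≤ Nat.log 2 ((d + 2).toNat / 3) := by
    intro s hs h3
    have hle : (s + 1).toNat ≤ (d + 2).toNat / 3 := by
      rw [Nat.le_div_iff_mul_le (by norm_num)]
      omega
    exact_mod_cast Nat.log_mono_right hle
  unfold lab Kd
  split_ifs with h1 h2
  · have := hmono t ht0 h1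
    omega
  · have := hmono (d - t) (by omega) h2
    omega
  · omega

lemma Kd_le {d : ℤ} (hd : 1 ≤ d) :
    ((Kd d : ℤ) : ℝ) ≤ 1 + Real.logb 2 (1 + (d : ℝ) / 3) := by
  unfold Kd
  set q : ℕ := (d + 2).toNat / 3 with hq
  have hq1 : 1 ≤ q := by
    rw [hq, Nat.le_div_iff_mul_le (by norm_num)]
    omega
  have hpow : ((2 ^ Nat.log 2 q : ℕ) : ℤ) ≤ q := by
    exact_mod_cast Nat.pow_log_le_self 2 (by omega)
  have hq3 : (q : ℤ) * 3 ≤ d + 2 := by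
    have := Nat.div_mul_le_self (d + 2).toNat 3
    omega
  -- (2:ℝ) ^ log ≤ 1 + d/3
  have hR : (2 : ℝ) ^ Nat.log 2 q ≤ 1 + (d : ℝ) / 3 := by
    have h1 : ((2 ^ Nat.log 2 q : ℕ) : ℝ) ≤ (q : ℝ) := by exact_mod_cast hpow
    have h2 : (q : ℝ) ≤ ((d : ℝ) + 2) / 3 := by
      have : ((q : ℤ) : ℝ) * 3 ≤ (d : ℝ) + 2 := by exact_mod_cast hq3
      push_cast at this
      linarith
    push_cast at h1
    linarith
  have hpos : (0 : ℝ) < 1 + (d : ℝ) / 3 := by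
    have : (1 : ℝ) ≤ d := by exact_mod_cast hd
    linarith
  have hlog : (Nat.log 2 q : ℝ) ≤ Real.logb 2 (1 + (d : ℝ) / 3) := by
    have := Real.logb_le_logb_of_le (b := 2) (by norm_num)
      (x := (2 : ℝ) ^ Nat.log 2 q) (by positivity) hR
    rw [Real.logb_pow, Real.logb_self_eq_one (by norm_num)] at this
    linarith
  push_cast
  linarith

lemma Kd_pos (d : ℤ) : 1 ≤ Kd d := by
  unfold Kd; omega


/-- The parallelepiped `P(A,b,c) = {x ∈ ℝⁿ : b ≤ Ax ≤ c}`. -/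
def Parallelepiped {n : ℕ} (A : Matrix (Fin n) (Fin n) ℤ) (b c : Fin n → ℤ) :
    Set (Fin n → ℝ) :=
  {x | ∀ i, (b i : ℝ) ≤ ∑ j, (A i j : ℝ) * x j ∧ ∑ j, (A i j : ℝ) * x j ≤ (c i : ℝ)}

/-- The number of irreducible points of `P(A,b,c)` (with `A` non-singular, `b < c`)
is at most `2·∏_{i=1}^{n-1} (3 + 2 log₂(1 + (cᵢ-bᵢ)/3))`. -/
theorem card_irreducible_parallelepiped {n : ℕ} (A : Matrix (Fin n) (Fin n) ℤ)
    (hA : A.det ≠ 0) (b c : Fin n → ℤ) (hbc : ∀ i, b i < c i) :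
    {x | IrreduciblePt (Parallelepiped A b c) x}.Finite ∧
    ({x | IrreduciblePt (Parallelepiped A b c) x}.ncard : ℝ) ≤
      2 * ∏ i ∈ Finset.univ.filter (fun i : Fin n => (i : ℕ) < n - 1),
        (3 + 2 * Real.logb 2 (1 + ((c i : ℝ) - (b i : ℝ)) / 3)) := by
  classical
  set S := {x | IrreduciblePt (Parallelepiped A b c) x} with hSdef
  rcases Nat.eq_zero_or_pos n with hn | hn
  · subst hn
    have hsub : S.Subsingleton := by
      intro x _ y _
      funext i; exact i.elim0
    refine ⟨hsub.finite, ?_⟩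
    have h1 : S.ncard ≤ 1 := by
      rcases S.eq_empty_or_nonempty with h | ⟨x0, hx0⟩
      · simp [h]
      · have : S = {x0} := Set.eq_singleton_iff_unique_mem.mpr
          ⟨hx0, fun y hy => hsub hy hx0⟩
        simp [this]
    have h2 : (Finset.univ.filter (fun i : Fin 0 => (i : ℕ) < 0 - 1)) = ∅ := by
      simp
    rw [h2, Finset.prod_empty]
    have : (S.ncard : ℝ) ≤ 1 := by exact_mod_cast h1
    linarith
  · have hLlt : n - 1 < n := by omega
    set L : Fin n := ⟨n - 1, hLlt⟩ with hLdef
    set Y : (Fin n → ℝ) → Fin n → ℤ := fun x i => ∑ j, A i j * round (x j) with hYdef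
    have hY : ∀ x : Fin n → ℝ, IsIntPt x → ∀ i,
        ((Y x i : ℤ) : ℝ) = ∑ j, (A i j : ℝ) * x j := by
      intro x hx i
      simp only [hYdef]
      push_cast
      refine Finset.sum_congr rfl fun j _ => ?_
      obtain ⟨m, hm⟩ := hx j
      rw [hm, round_intCast]
    have hmem : ∀ x ∈ S, ∀ i, b i ≤ Y x i ∧ Y x i ≤ c i := by
      intro x hx i
      obtain ⟨hxQ, hxI, -⟩ := hx
      have h := hxQ i
      rw [← hY x hxI i] at h
      exact ⟨by exact_mod_cast h.1, by exact_mod_cast h.2⟩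
    set ℓ : (Fin n → ℝ) → Fin n → ℤ :=
      fun x i => if (i : ℕ) < n - 1 then lab (c i - b i) (Y x i - b i) else 0 with hldef
    have hD : ∀ x ∈ S, ∀ x' ∈ S, x ≠ x' → ℓ x = ℓ x' →
        ¬ (b L ≤ 2 * Y x L - Y x' L ∧ 2 * Y x L - Y x' L ≤ c L) := by
      intro x hx x' hx' hne hll hcon
      obtain ⟨hxQ, hxI, hxirr⟩ := id hx
      obtain ⟨hxQ', hxI', -⟩ := id hx'
      apply hxirr
      refine ⟨x', fun j => 2 * x j - x' j, hxQ', ?_, hxI', ?_, ?_, ?_⟩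
      · intro i
        have hsum : ∑ j, (A i j : ℝ) * (2 * x j - x' j)
            = ((2 * Y x i - Y x' i : ℤ) : ℝ) := by
          push_cast
          rw [hY x hxI i, hY x' hxI' i, Finset.mul_sum, ← Finset.sum_sub_distrib]
          exact Finset.sum_congr rfl fun j _ => by ring
        rw [hsum]
        by_cases hi : (i : ℕ) < n - 1
        · have heq : lab (c i - b i) (Y x i - b i) = lab (c i - b i) (Y x' i - b i) := by
            have h' := congrFun hll i
            simpa [hldef, hi] using h'
          obtain ⟨hb1, hb2⟩ := hmem x hx i
          obtain ⟨hb1', hb2'⟩ := hmem x' hx' i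
          obtain ⟨g1, g2⟩ := lab_mid (t := Y x i - b i) (t' := Y x' i - b i)
            (by omega) (by omega) (by omega) (by omega) heq
          constructor
          · exact_mod_cast (show (b i : ℤ) ≤ 2 * Y x i - Y x' i by omega)
          · exact_mod_cast (show (2 * Y x i - Y x' i : ℤ) ≤ c i by omega)
        · have hiL : i = L := by
            apply Fin.ext
            have h' := i.isLt
            simp only [hLdef]
            omega
          rw [hiL]
          constructor
          · exact_mod_cast hcon.1
          · exact_mod_cast hcon.2
      · intro j
        obtain ⟨m, hm⟩ := hxI j
        obtain ⟨m', hm'⟩ := hxI' j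
        exact ⟨2 * m - m', by show 2 * x j - x' j = _; rw [hm, hm']; push_cast; ring⟩
      · intro heq
        apply hne
        funext j
        have h' := congrFun heq j
        linarith
      · funext j
        simp only [Pi.smul_apply, Pi.add_apply, smul_eq_mul]
        ring
    have h3 : ∀ x1 ∈ S, ∀ x2 ∈ S, ∀ x3 ∈ S, ℓ x1 = ℓ x2 → ℓ x1 = ℓ x3 →
        x1 = x2 ∨ x1 = x3 ∨ x2 = x3 := by
      intro x1 h1 x2 h2 x3 hh3 e12 e13
      by_contra hcon
      push_neg at hcon
      obtain ⟨n12, n13, n23⟩ := hcon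
      have e23 : ℓ x2 = ℓ x3 := e12.symm.trans e13
      have d12 := hD x1 h1 x2 h2 n12 e12
      have d21 := hD x2 h2 x1 h1 (Ne.symm n12) e12.symm
      have d13 := hD x1 h1 x3 hh3 n13 e13
      have d31 := hD x3 hh3 x1 h1 (Ne.symm n13) e13.symm
      have d23 := hD x2 h2 x3 hh3 n23 e23
      have d32 := hD x3 hh3 x2 h2 (Ne.symm n23) e23.symm
      obtain ⟨m1, m1'⟩ := hmem x1 h1 L
      obtain ⟨m2, m2'⟩ := hmem x2 h2 L
      obtain ⟨m3, m3'⟩ := hmem x3 hh3 L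
      omega
    set t : Fin n → Finset ℤ := fun i =>
      if (i : ℕ) < n - 1 then Finset.Icc (-(Kd (c i - b i))) (Kd (c i - b i)) else {0}
      with htdef
    set V : Finset (Fin n → ℤ) := Fintype.piFinset t with hVdef
    have hmaps : ∀ x ∈ S, ℓ x ∈ V := by
      intro x hx
      rw [hVdef, Fintype.mem_piFinset]
      intro i
      simp only [htdef, hldef]
      by_cases hi : (i : ℕ) < n - 1
      · simp only [hi, if_true]
        obtain ⟨hb1, hb2⟩ := hmem x hx i
        obtain ⟨g1, g2⟩ := lab_mem (d := c i - b i) (t := Y x i - b i) (by omega) (by omega)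
        exact Finset.mem_Icc.mpr ⟨g1, g2⟩
      · simp [hi]
    have hfib : ∀ v : Fin n → ℤ, ({x ∈ S | ℓ x = v}).Finite := by
      intro v
      by_contra hinf
      have f := Set.Infinite.natEmbedding _ hinf
      have mem0 := (f 0).2
      have mem1 := (f 1).2
      have mem2 := (f 2).2
      simp only [Set.mem_setOf_eq] at mem0 mem1 mem2
      have hne : ∀ k m : ℕ, k ≠ m → ((f k : _) : Fin n → ℝ) ≠ (f m : _) := by
        intro k m hkm hval
        exact hkm (f.injective (Subtype.ext hval))
      rcases h3 _ mem0.1 _ mem1.1 _ mem2.1 (mem0.2.trans mem1.2.symm)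
        (mem0.2.trans mem2.2.symm) with h | h | h
      · exact hne 0 1 (by norm_num) h
      · exact hne 0 2 (by norm_num) h
      · exact hne 1 2 (by norm_num) h
    have hfin : S.Finite := by
      have hsub : S ⊆ ⋃ v ∈ V, {x ∈ S | ℓ x = v} := by
        intro x hx
        exact Set.mem_biUnion (hmaps x hx) ⟨hx, rfl⟩
      exact (Set.Finite.biUnion V.finite_toSet fun v _ => hfib v).subset hsub
    refine ⟨hfin, ?_⟩
    set s : Finset (Fin n → ℝ) := hfin.toFinset with hsdef
    have hcard : s.card ≤ 2 * V.card := by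
      apply Finset.card_le_mul_card_image_of_maps_to
        (f := ℓ) (t := V) (fun a ha => hmaps a (hfin.mem_toFinset.mp ha)) 2
      intro v hv
      by_contra hgt
      push_neg at hgt
      obtain ⟨a, b', c', ha, hb, hc, hab, hac, hbc'⟩ := Finset.two_lt_card_iff.mp hgt
      simp only [Finset.mem_filter, hsdef, Set.Finite.mem_toFinset] at ha hb hc
      rcases h3 a ha.1 b' hb.1 c' hc.1 (ha.2.trans hb.2.symm) (ha.2.trans hc.2.symm)
        with h | h | h
      · exact hab h
      · exact hac h
      · exact hbc' h
    have hncard : S.ncard = s.card := Set.ncard_eq_toFinset_card _ hfin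
    rw [hncard]
    have hVcard : V.card = ∏ i, (t i).card := Fintype.card_piFinset t
    have hfac : ∀ i : Fin n, (i : ℕ) < n - 1 →
        ((t i).card : ℝ) ≤ 3 + 2 * Real.logb 2 (1 + ((c i : ℝ) - (b i : ℝ)) / 3) := by
      intro i hi
      have hd : (1 : ℤ) ≤ c i - b i := by have := hbc i; omega
      have hK := Kd_le hd
      have hK1 := Kd_pos (c i - b i)
      have hcardi : (t i).card = (2 * Kd (c i - b i) + 1).toNat := by
        simp only [htdef, hi, if_true, Int.card_Icc]
        congr 1
        ring
      rw [hcardi]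
      have hnn : (0 : ℤ) ≤ 2 * Kd (c i - b i) + 1 := by omega
      have hcast : (((2 * Kd (c i - b i) + 1).toNat : ℕ) : ℝ)
          = 2 * ((Kd (c i - b i) : ℤ) : ℝ) + 1 := by
        have h' : (((2 * Kd (c i - b i) + 1).toNat : ℕ) : ℤ) = 2 * Kd (c i - b i) + 1 :=
          Int.toNat_of_nonneg hnn
        have h'' : (((2 * Kd (c i - b i) + 1).toNat : ℕ) : ℝ)
            = ((2 * Kd (c i - b i) + 1 : ℤ) : ℝ) := by exact_mod_cast congrArg (fun z : ℤ => (z : ℝ)) h'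
        rw [h'']
        push_cast
        ring
      rw [hcast]
      push_cast at hK
      linarith
    calc (s.card : ℝ) ≤ ((2 * V.card : ℕ) : ℝ) := by exact_mod_cast hcard
      _ = 2 * ∏ i, ((t i).card : ℝ) := by rw [hVcard]; push_cast; ring
      _ = 2 * ∏ i ∈ Finset.univ.filter (fun i : Fin n => (i : ℕ) < n - 1),
            ((t i).card : ℝ) := by
          congr 1
          rw [Finset.prod_filter]
          refine Finset.prod_congr rfl fun i _ => ?_
          by_cases hi : (i : ℕ) < n - 1
          · rw [if_pos hi]
          · rw [if_neg hi]
            simp [htdef, hi]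
      _ ≤ 2 * ∏ i ∈ Finset.univ.filter (fun i : Fin n => (i : ℕ) < n - 1),
            (3 + 2 * Real.logb 2 (1 + ((c i : ℝ) - (b i : ℝ)) / 3)) := by
          refine mul_le_mul_of_nonneg_left
            (Finset.prod_le_prod (fun i _ => by positivity)
              (fun i hi => hfac i (Finset.mem_filter.mp hi).2)) (by norm_num)
end

section
/- Let b ≤ c be integers and 0 ≤ j ≤ s−1 where 3·2^{s−1} − 3 < c − b. If integers u, v satisfy b + 2^j − 1 ≤ u ≤ v < b + 2^{j+1} − 1, then the integer 2v − u satisfies b ≤ 2v − u ≤ c. Analogously, if b + 2^s − 1 ≤ u ≤ v ≤ c − 2^s + 1 (case j = s), or c − 2^{j−s} + 1 < u ≤ v ≤ c − 2^{j−1−s} + 1 with s+1 ≤ j ≤ 2s, then b ≤ 2v − u ≤ c. -/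
/-- The reflection estimate: within each dyadic subinterval of `[b, c]`, the reflection
`2v - u` of `u` through `v` stays in `[b, c]`. -/
theorem dyadic_reflection (s : ℕ) (hs : 1 ≤ s) (b c : ℤ)
    (hlow : 3 * 2 ^ (s - 1) - 3 < c - b) (hhigh : c - b ≤ 3 * 2 ^ s - 3) :
    (∀ (j : ℕ) (u v : ℤ), j ≤ s - 1 →
      b + 2 ^ j - 1 ≤ u → u ≤ v → v < b + 2 ^ (j + 1) - 1 →
      b ≤ 2 * v - u ∧ 2 * v - u ≤ c) ∧
    (∀ u v : ℤ, b + 2 ^ s - 1 ≤ u → u ≤ v → v ≤ c - 2 ^ s + 1 →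
      b ≤ 2 * v - u ∧ 2 * v - u ≤ c) ∧
    (∀ (j : ℕ) (u v : ℤ), s + 1 ≤ j → j ≤ 2 * s →
      c - 2 ^ (j - s) + 1 < u → u ≤ v → v ≤ c - 2 ^ (j - 1 - s) + 1 →
      b ≤ 2 * v - u ∧ 2 * v - u ≤ c) := by
  have hlow' : b + 3 * 2 ^ (s - 1) - 2 ≤ c := by linarith [Int.lt_iff_add_one_le.mp hlow]
  refine ⟨?_, ?_, ?_⟩
  · intro j u v hj hu huv hv
    have h1 : (2:ℤ) ^ j ≤ 2 ^ (s - 1) := pow_le_pow_right₀ (by norm_num) hj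
    have h2 : (2:ℤ) ^ (j + 1) = 2 * 2 ^ j := by ring
    have h3 : (1:ℤ) ≤ 2 ^ j := one_le_pow₀ (by norm_num)
    have hv' : v + 1 ≤ b + 2 ^ (j + 1) - 1 := Int.lt_iff_add_one_le.mp hv
    constructor
    · linarith
    · linarith
  · intro u v hu huv hv
    have h3 : (1:ℤ) ≤ 2 ^ s := one_le_pow₀ (by norm_num)
    exact ⟨by linarith, by linarith⟩
  · intro j u v hj1 hj2 hu huv hv
    have h0 : j - s = (j - 1 - s) + 1 := by omega
    have h1 : (2:ℤ) ^ (j - s) = 2 * 2 ^ (j - 1 - s) := by rw [h0, pow_succ]; ring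
    have h2 : (2:ℤ) ^ (j - s) ≤ 2 ^ s := pow_le_pow_right₀ (by norm_num) (by omega)
    have h4 : s = (s - 1) + 1 := by omega
    have h5 : (2:ℤ) ^ s = 2 * 2 ^ (s - 1) := by conv_lhs => rw [h4, pow_succ, mul_comm]
    have h6 : (1:ℤ) ≤ 2 ^ (s - 1) := one_le_pow₀ (by norm_num)
    have hu' : c - 2 ^ (j - s) + 2 ≤ u := by linarith [Int.lt_iff_add_one_le.mp hu]
    exact ⟨by linarith, by linarith⟩
end

section
/- Let S = conv{v₀, v₁, …, v_n} be an n-dimensional simplex in ℝⁿ. For i = 0, …, n define S_i = conv{w_{i0}, …, w_{in}} where w_{ij} = (1/(n+1))·v_i + (n/(n+1))·v_j. Then S = S₀ ∪ S₁ ∪ ⋯ ∪ S_n. -/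
/-!
If `x = ∑ w j • v j` is a convex combination, some weight satisfies `w i ≥ 1 / (n + 1)`
(pigeonhole). Taking the mass `1 - r = 1 / (n + 1)` away from `v i` and dividing the remaining
weights by `r` gives a point `y` of the simplex with `x = (1 - r) • v i + r • y`, i.e. `x` is the
image of `y` under the homothety of centre `v i` and ratio `r`. The reverse inclusion is convexity.
-/

open Set Finset AffineMap

variable {ι E : Type*} [Fintype ι] [AddCommGroup E] [Module ℝ E]

lemma convexHull_range_eq_image_stdSimplex (v : ι → E) :
    convexHull ℝ (range v) = Fintype.linearCombination ℝ v '' stdSimplex ℝ ι := by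
  classical
  rw [← convexHull_rangle_single_eq_stdSimplex, LinearMap.image_convexHull, ← range_comp]
  congr! 1
  ext i
  simp [Fintype.linearCombination_apply_single]

lemma sum_smul_mem_image_homothety_convexHull (v : ι → E) {w : ι → ℝ} (hw₀ : ∀ j, 0 ≤ w j)
    (hw₁ : ∑ j, w j = 1) {i : ι} {r : ℝ} (hr : 0 < r) (hi : 1 - r ≤ w i) :
    ∑ j, w j • v j ∈ homothety (v i) r '' convexHull ℝ (range v) := by
  classical
  set s : ι → ℝ := fun j => r⁻¹ * (w j - if j = i then 1 - r else 0)
  have hs₀ : ∀ j, 0 ≤ s j := fun j => by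
    refine mul_nonneg (inv_nonneg.2 hr.le) (sub_nonneg.2 ?_)
    split_ifs
    exacts [‹j = i› ▸ hi, hw₀ j]
  have hs₁ : ∑ j, s j = 1 := by
    simp only [s, ← mul_sum, sum_sub_distrib, hw₁, sum_ite_eq', Finset.mem_univ, if_true]
    field_simp
    ring
  have hrs : r • ∑ j, s j • v j = ∑ j, w j • v j - (1 - r) • v i := by
    simp only [s, smul_sum, smul_smul, ← mul_assoc, mul_inv_cancel₀ hr.ne', one_mul, sub_smul,
      sum_sub_distrib, ite_smul, zero_smul, sum_ite_eq', Finset.mem_univ, if_true]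
  refine ⟨∑ j, s j • v j, (convex_convexHull ℝ _).sum_mem (fun j _ => hs₀ j) hs₁
    fun j _ => subset_convexHull ℝ _ (mem_range_self j), ?_⟩
  rw [homothety_apply, vsub_eq_sub, vadd_eq_add, smul_sub, hrs]
  module

theorem convexHull_range_eq_iUnion_image_homothety (v : ι → E) {r : ℝ} (hr₀ : 0 < r)
    (hr : 1 - (Fintype.card ι : ℝ)⁻¹ ≤ r) (hr₁ : r ≤ 1) :
    convexHull ℝ (range v) = ⋃ i, homothety (v i) r '' convexHull ℝ (range v) := by
  refine Subset.antisymm (fun x hx => ?_) (iUnion_subset fun i => ?_)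
  · rw [convexHull_range_eq_image_stdSimplex] at hx
    obtain ⟨w, ⟨hw₀, hw₁⟩, rfl⟩ := hx
    have : Nonempty ι := univ_nonempty_iff.1 (nonempty_of_sum_ne_zero (hw₁.trans_ne one_ne_zero))
    obtain ⟨i, -, hi⟩ :=
      exists_le_of_sum_le (f := fun _ => (Fintype.card ι : ℝ)⁻¹) (g := w) univ_nonempty <| by
        rw [hw₁, sum_const, card_univ, nsmul_eq_mul, mul_inv_cancel₀ (by positivity)]
    rw [Fintype.linearCombination_apply]
    exact mem_iUnion.2 ⟨i, sum_smul_mem_image_homothety_convexHull v hw₀ hw₁ hr₀ (by linarith)⟩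
  · rintro _ ⟨y, hy, rfl⟩
    rw [homothety_eq_lineMap]
    exact (convex_convexHull ℝ _).lineMap_mem (subset_convexHull ℝ _ (mem_range_self i)) hy
      ⟨hr₀.le, hr₁⟩

theorem simplex_covered_by_shrunken_copies_general {n : ℕ} (v : Fin (n + 1) → (Fin n → ℝ)) :
    convexHull ℝ (Set.range v) =
      ⋃ i : Fin (n + 1), convexHull ℝ
        (Set.range fun j : Fin (n + 1) =>
          (1 / (n + 1) : ℝ) • v i + ((n : ℝ) / (n + 1)) • v j) := by
  rcases n.eq_zero_or_pos with rfl | hn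
  · -- `Fin 0 → ℝ` is a point, so both sides are `univ`
    refine (range_nonempty v).convexHull.eq_univ.trans (Set.Nonempty.eq_univ ?_).symm
    exact ⟨_, mem_iUnion.2 ⟨0, subset_convexHull ℝ _ (mem_range_self 0)⟩⟩
  have hS (i : Fin (n + 1)) :
      convexHull ℝ (range fun j => (1 / (n + 1) : ℝ) • v i + ((n : ℝ) / (n + 1)) • v j) =
        homothety (v i) ((n : ℝ) / (n + 1)) '' convexHull ℝ (range v) := by
    rw [AffineMap.image_convexHull, ← range_comp]
    congr 2
    funext j
    rw [Function.comp_apply, homothety_eq_lineMap, lineMap_apply_module]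
    congr 2
    field_simp
    ring
  rw [iUnion_congr hS]
  refine convexHull_range_eq_iUnion_image_homothety v (by positivity) ?_ ?_
  · rw [Fintype.card_fin, Nat.cast_succ]
    field_simp
    linarith
  · rw [div_le_one (by positivity)]
    linarith

/-- The `n+1` homothetic copies `S_i = conv{w_{i0}, …, w_{in}}`, where
`w_{ij} = (1/(n+1)) v_i + (n/(n+1)) v_j`, cover the simplex `S = conv{v₀, …, v_n}`. -/
theorem simplex_covered_by_shrunken_copies {n : ℕ} (v : Fin (n + 1) → (Fin n → ℝ))
    (hv : AffineIndependent ℝ v) :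
    convexHull ℝ (Set.range v) =
      ⋃ i : Fin (n + 1), convexHull ℝ
        (Set.range fun j : Fin (n + 1) =>
          (1 / (n + 1) : ℝ) • v i + ((n : ℝ) / (n + 1)) • v j) :=
  simplex_covered_by_shrunken_copies_general v
end

section
/- Let n ≥ 2, let S = {x ∈ ℝⁿ : Σⱼ xⱼ ≤ n² − 1, xⱼ ≥ 0 for all j} and S₀ = {x ∈ ℝⁿ : Σⱼ xⱼ ≤ n² − n, xⱼ ≥ 0 for all j}. Let Y = {y ∈ ℤⁿ : Σⱼ yⱼ = n² − 1, yⱼ ≥ 1 for all j}, and for y ∈ Y let Π(y) = {x ∈ ℝⁿ : 0 ≤ xⱼ ≤ yⱼ for all j}. Then S₀ ⊆ ⋃_{y ∈ Y} Π(y) ⊆ S. -/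
/-- The boxes `Π(y)`, for `y ∈ ℤⁿ` with `yⱼ ≥ 1` and `Σ yⱼ = n² − 1`, form an outer cover
of the shrunken simplex `S₀` contained in the simplex `S`. -/
theorem boxes_cover_shrunken_simplex (n : ℕ) (hn : 2 ≤ n) :
    {x : Fin n → ℝ | (∀ j, 0 ≤ x j) ∧ ∑ j, x j ≤ (n : ℝ) ^ 2 - n} ⊆
      (⋃ y ∈ {y : Fin n → ℤ | (∀ j, 1 ≤ y j) ∧ ∑ j, y j = (n : ℤ) ^ 2 - 1},
        {x : Fin n → ℝ | ∀ j, 0 ≤ x j ∧ x j ≤ (y j : ℝ)}) ∧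
    (⋃ y ∈ {y : Fin n → ℤ | (∀ j, 1 ≤ y j) ∧ ∑ j, y j = (n : ℤ) ^ 2 - 1},
        {x : Fin n → ℝ | ∀ j, 0 ≤ x j ∧ x j ≤ (y j : ℝ)}) ⊆
      {x : Fin n → ℝ | (∀ j, 0 ≤ x j) ∧ ∑ j, x j ≤ (n : ℝ) ^ 2 - 1} := by
  have hnpos : 0 < n := by omega
  constructor
  · intro x hx
    obtain ⟨hx0, hxs⟩ := hx
    set y : Fin n → ℤ := fun j => ⌈x j⌉ ⊔ 1 with hy
    have hy1 : ∀ j, 1 ≤ y j := fun j => le_sup_right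
    have hyx : ∀ j, x j ≤ (y j : ℝ) := by
      intro j
      refine le_trans (Int.le_ceil _) ?_
      exact_mod_cast (le_sup_left : (⌈x j⌉ : ℤ) ≤ ⌈x j⌉ ⊔ 1)
    have hyfl : ∀ j, y j ≤ ⌊x j⌋ + 1 := by
      intro j
      have h0 : (0 : ℤ) ≤ ⌊x j⌋ := Int.floor_nonneg.2 (hx0 j)
      exact sup_le (Int.ceil_le_floor_add_one _) (by omega)
    have hfl_sum : (∑ j, ⌊x j⌋ : ℤ) ≤ (n : ℤ) ^ 2 - n := by
      have h : ((∑ j, ⌊x j⌋ : ℤ) : ℝ) ≤ ((((n : ℤ) ^ 2 - n : ℤ)) : ℝ) := by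
        push_cast
        exact le_trans (Finset.sum_le_sum fun j _ => Int.floor_le _) hxs
      exact_mod_cast h
    have hsum_split : ∑ j, (⌊x j⌋ + 1) = (∑ j, ⌊x j⌋) + (n : ℤ) := by
      rw [Finset.sum_add_distrib]
      simp
    have hm : ∑ j, y j ≤ (n : ℤ) ^ 2 := by
      calc ∑ j, y j ≤ ∑ j, (⌊x j⌋ + 1) := Finset.sum_le_sum fun j _ => hyfl j
        _ = (∑ j, ⌊x j⌋) + (n : ℤ) := hsum_split
        _ ≤ (n : ℤ) ^ 2 := by omega
    have hm' : ∑ j, y j ≤ (n : ℤ) ^ 2 - 1 := by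
      by_contra hcon
      have hsum_eq : ∑ j, y j = (n : ℤ) ^ 2 := le_antisymm hm (by omega)
      -- Then each y j = ⌊x j⌋ + 1 and ∑ ⌊x j⌋ = n² − n.
      have hge : ∑ j, (⌊x j⌋ + 1) ≤ ∑ j, y j := by
        rw [hsum_eq, hsum_split]; omega
      have hsum_eq2 : ∑ j, y j = ∑ j, (⌊x j⌋ + 1) :=
        le_antisymm (Finset.sum_le_sum fun j _ => hyfl j) hge
      have hterm : ∀ j ∈ Finset.univ, y j = ⌊x j⌋ + 1 :=
        (Finset.sum_eq_sum_iff_of_le (fun j _ => hyfl j)).1 hsum_eq2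
      have hflsum_eq : (∑ j, ⌊x j⌋ : ℤ) = (n : ℤ) ^ 2 - n := by
        have := hsum_eq2 ▸ hsum_eq
        rw [hsum_split] at this
        omega
      -- Real sums: ∑ ⌊x j⌋ = ∑ x j, so each x j = ⌊x j⌋.
      have hreal_le : ∑ j, x j ≤ ∑ j, ((⌊x j⌋ : ℝ)) := by
        calc ∑ j, x j ≤ (n : ℝ) ^ 2 - n := hxs
          _ = (((n : ℤ) ^ 2 - n : ℤ) : ℝ) := by push_cast; ring
          _ = ((∑ j, ⌊x j⌋ : ℤ) : ℝ) := by rw [hflsum_eq]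
          _ = ∑ j, ((⌊x j⌋ : ℝ)) := by push_cast; rfl
      have hreal_eq : ∑ j, ((⌊x j⌋ : ℝ)) = ∑ j, x j :=
        le_antisymm (Finset.sum_le_sum fun j _ => Int.floor_le _) hreal_le
      have hterm2 : ∀ j ∈ Finset.univ, ((⌊x j⌋ : ℝ)) = x j :=
        (Finset.sum_eq_sum_iff_of_le (fun j _ => Int.floor_le _)).1 hreal_eq
      -- Each x j is an integer, so y j = ⌊x j⌋ ⊔ 1 = ⌊x j⌋ + 1 forces ⌊x j⌋ = 0.
      have hfl0 : ∀ j, ⌊x j⌋ = 0 := by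
        intro j
        have hint : x j = ((⌊x j⌋ : ℝ)) := (hterm2 j (Finset.mem_univ j)).symm
        have hceil : ⌈x j⌉ = ⌊x j⌋ := by
          rw [hint, Int.ceil_intCast, Int.floor_intCast]
        have := hterm j (Finset.mem_univ j)
        rw [hy] at this
        simp only [hceil] at this
        rcases le_or_gt (⌊x j⌋) 1 with h | h
        · rw [sup_eq_right.2 h] at this; omega
        · rw [sup_eq_left.2 h.le] at this; omega
      have : (∑ j, ⌊x j⌋ : ℤ) = 0 := by
        simp [hfl0]
      rw [hflsum_eq] at this
      have : (n : ℤ) ^ 2 = n := by omega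
      have hn2 : (2 : ℤ) ≤ (n : ℤ) := by exact_mod_cast hn
      nlinarith
    -- Pad coordinate 0 to reach sum exactly n² − 1.
    set i0 : Fin n := ⟨0, hnpos⟩ with hi0
    set d : ℤ := (n : ℤ) ^ 2 - 1 - ∑ j, y j with hd
    have hd0 : 0 ≤ d := by omega
    set z : Fin n → ℤ := fun j => y j + (if j = i0 then d else 0) with hz
    have hzsum : ∑ j, z j = (n : ℤ) ^ 2 - 1 := by
      rw [hz]
      rw [Finset.sum_add_distrib, Finset.sum_ite_eq' Finset.univ i0 (fun _ => d)]
      simp [hd]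
    refine Set.mem_iUnion₂.2 ⟨z, ⟨?_, hzsum⟩, ?_⟩
    · intro j
      have := hy1 j
      show 1 ≤ y j + (if j = i0 then d else 0)
      split <;> omega
    · intro j
      refine ⟨hx0 j, ?_⟩
      have h1 : (y j : ℝ) ≤ (z j : ℝ) := by
        have : y j ≤ z j := by
          show y j ≤ y j + (if j = i0 then d else 0)
          split <;> omega
        exact_mod_cast this
      exact le_trans (hyx j) h1
  · intro x hx
    simp only [Set.mem_iUnion, Set.mem_setOf_eq] at hx ⊢
    obtain ⟨y, ⟨hy1, hysum⟩, hxy⟩ := hx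
    refine ⟨fun j => (hxy j).1, ?_⟩
    calc ∑ j, x j ≤ ∑ j, (y j : ℝ) := Finset.sum_le_sum fun j _ => (hxy j).2
      _ = (((∑ j, y j : ℤ)) : ℝ) := by push_cast; rfl
      _ = (n : ℝ) ^ 2 - 1 := by rw [hysum]; push_cast; ring
end

section
/- Every n-dimensional simplex S ⊆ ℝⁿ can be covered by at most (n+1)·C(n²−2, n−1) n-dimensional parallelepipeds, each contained in S. -/
/-!
In barycentric coordinates `λ` of the simplex, fix a vertex `i` and positive integers `z_j`
(`j ≠ i`) summing to `N = n² - 1`. The box `0 ≤ λ_j ≤ z_j / N` (`j ≠ i`) is the preimage of a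
coordinate box under an affine bijection, hence a parallelepiped, and it lies in the simplex
because `λ_i = 1 - ∑ λ_j ≥ 1 - ∑ z_j / N = 0`. Conversely, every point has a coordinate
`λ_i ≥ 1 / (n + 1)`; rounding each other coordinate up to a positive multiple of `1 / N` costs
less than `1 / N`, except at vanishing coordinates, and since `N · n / (n + 1) = N - (n - 1)`
this leaves exactly enough room: the rounded values sum to at most `1`. There are `n + 1`
vertices and `C(N - 1, n - 1)` compositions `z`.
-/

/-- A parallelepiped in `ℝⁿ` is a set `{x : b ≤ Ax ≤ c}` for a non-singular matrix `A`
and vectors `b < c`. -/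
def IsParallelepiped {n : ℕ} (Q : Set (Fin n → ℝ)) : Prop :=
  ∃ (A : Matrix (Fin n) (Fin n) ℝ) (b c : Fin n → ℝ),
    A.det ≠ 0 ∧ (∀ i, b i < c i) ∧
    Q = {x | ∀ i, b i ≤ ∑ j, A i j * x j ∧ ∑ j, A i j * x j ≤ c i}

open Finset

theorem isParallelepiped_of_injective {n : ℕ} (f : (Fin n → ℝ) →ᵃ[ℝ] (Fin n → ℝ))
    (hf : Function.Injective f) {b c : Fin n → ℝ} (hbc : ∀ i, b i < c i) :
    IsParallelepiped {x | ∀ i, b i ≤ f x i ∧ f x i ≤ c i} := by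
  set A := LinearMap.toMatrix' f.linear
  refine ⟨A, b - f 0, c - f 0, fun hdet => ?_, fun i => sub_lt_sub_right (hbc i) _, ?_⟩
  · obtain ⟨x, hx0, hx⟩ := Matrix.exists_mulVec_eq_zero_iff.mpr hdet
    rw [LinearMap.toMatrix'_mulVec, ← f.linear.map_zero] at hx
    exact hx0 (f.linear_injective_iff.mpr hf hx)
  · have hA : ∀ x i, ∑ j, A i j * x j = f x i - f 0 i := fun x i => by
      have h := congrFun (congrFun f.decomp x) i
      rw [Pi.add_apply, Pi.add_apply, ← LinearMap.toMatrix'_mulVec] at h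
      rw [h, add_sub_cancel_right]
      rfl
    ext x
    refine forall_congr' fun i => ?_
    rw [hA, Pi.sub_apply, Pi.sub_apply, sub_le_sub_iff_right, sub_le_sub_iff_right]

theorem card_piAntidiag_univ_fin (n k : ℕ) :
    #(piAntidiag (univ : Finset (Fin n)) k) = (n + k - 1).choose k := by
  rw [← map_sym_eq_piAntidiag, card_map, sym_univ, card_univ, Sym.card_sym_eq_choose,
    Fintype.card_fin]

theorem exists_mem_piAntidiag_univ_le {ι : Type*} [Fintype ι] [DecidableEq ι] (i₀ : ι)
    {g : ι → ℕ} {s : ℕ} (hg : ∑ i, g i ≤ s) : ∃ g' ∈ piAntidiag univ s, g ≤ g' := by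
  refine ⟨g + Pi.single i₀ (s - ∑ i, g i), ?_, fun i => Nat.le_add_right _ _⟩
  simp [mem_piAntidiag, sum_add_distrib, Nat.add_sub_cancel' hg]

theorem exists_sum_le_sub_and_mul_le_add_one {n N : ℕ} (hN : n ^ 2 ≤ N + 1) (hnN : n ≤ N)
    {μ : Fin n → ℝ} (hμ : ∀ r, 0 ≤ μ r) (hμsum : (n + 1) * ∑ r, μ r ≤ n) :
    ∃ g : Fin n → ℕ, ∑ r, g r ≤ N - n ∧ ∀ r, N * μ r ≤ g r + 1 := by
  -- truncated subtraction: `g r = 0` when `μ r = 0`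
  set g : Fin n → ℕ := fun r => ⌈N * μ r⌉₊ - 1
  have hup : ∀ r, N * μ r ≤ g r + 1 := fun r => by
    have : ⌈N * μ r⌉₊ ≤ g r + 1 := le_tsub_add
    exact (Nat.le_ceil _).trans (by exact_mod_cast this)
  have hlow : ∀ r, g r = 0 ∨ (g r : ℝ) < N * μ r := fun r => by
    rcases Nat.eq_zero_or_pos (g r) with h | h
    · exact Or.inl h
    · have hc : (⌈N * μ r⌉₊ : ℝ) < N * μ r + 1 :=
        Nat.ceil_lt_add_one (mul_nonneg (Nat.cast_nonneg _) (hμ r))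
      have hg : (g r : ℝ) + 1 = ⌈N * μ r⌉₊ := by
        exact_mod_cast Nat.sub_add_cancel (by simp only [g] at h; omega : 1 ≤ ⌈N * μ r⌉₊)
      exact Or.inr (by linarith)
  refine ⟨g, ?_, hup⟩
  by_cases hg0 : ∀ r, g r = 0
  · simp [hg0]
  push Not at hg0
  obtain ⟨r₀, hr₀⟩ := hg0
  have hlt : ∑ r, (g r : ℝ) < N * ∑ r, μ r := by
    rw [mul_sum]
    exact sum_lt_sum (fun r _ => (hlow r).elim (fun h => by simp [h, mul_nonneg, hμ r]) le_of_lt)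
      ⟨r₀, mem_univ _, (hlow r₀).resolve_left hr₀⟩
  have hcast : ((N - n : ℕ) : ℝ) = N - n := Nat.cast_sub hnN
  have hN' : (n : ℝ) ^ 2 ≤ N + 1 := by exact_mod_cast hN
  have : ((∑ r, g r : ℕ) : ℝ) < (N - n : ℕ) + 1 := by
    push_cast [hcast]
    nlinarith
  exact_mod_cast Nat.lt_succ_iff.mp (by exact_mod_cast this)

namespace AffineBasis

variable {n : ℕ} {E : Type*} [AddCommGroup E] [Module ℝ E] (b : AffineBasis (Fin (n + 1)) ℝ E)

noncomputable def coordsExcept (i : Fin (n + 1)) : E →ᵃ[ℝ] (Fin n → ℝ) :=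
  AffineMap.pi fun r => b.coord (i.succAbove r)

theorem sum_coordsExcept (i : Fin (n + 1)) (x : E) :
    ∑ r, b.coordsExcept i x r = 1 - b.coord i x := by
  rw [eq_sub_iff_add_eq', ← b.sum_coord_apply_eq_one x, Fin.sum_univ_succAbove _ i]
  rfl

theorem coordsExcept_injective (i : Fin (n + 1)) : Function.Injective (b.coordsExcept i) := by
  intro x y hxy
  have hrest : ∀ r, b.coord (i.succAbove r) x = b.coord (i.succAbove r) y := congrFun hxy
  refine b.ext_elem fun j => ?_
  rcases eq_or_ne j i with rfl | hj
  · have h := congrArg (fun z => ∑ r, z r) hxy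
    simp only [sum_coordsExcept] at h
    linarith
  · obtain ⟨r, rfl⟩ := Fin.exists_succAbove_eq hj
    exact hrest r

-- `g r + 1` is the part `z_r` of a composition `z` of `N`, so that the compositions are
-- indexed by `piAntidiag univ (N - n)`
def cornerBox (N : ℕ) (i : Fin (n + 1)) (g : Fin n → ℕ) : Set E :=
  {x | ∀ r, 0 ≤ b.coordsExcept i x r ∧ b.coordsExcept i x r ≤ (g r + 1) / N}

theorem cornerBox_subset_convexHull {N : ℕ} (hnN : n ≤ N) (i : Fin (n + 1)) {g : Fin n → ℕ}
    (hg : ∑ r, g r = N - n) : b.cornerBox N i g ⊆ convexHull ℝ (Set.range b) := by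
  rw [b.convexHull_eq_nonneg_coord]
  intro x hx j
  rcases eq_or_ne j i with rfl | hj
  · have hwidth : ∑ r, ((g r : ℝ) + 1) / N ≤ 1 := by
      rw [← sum_div]
      refine div_le_one_of_le₀ (le_of_eq ?_) (Nat.cast_nonneg _)
      have : ∑ r, (g r + 1) = N := by rw [sum_add_distrib, hg]; simp; omega
      exact_mod_cast this
    have := sum_le_sum fun r (_ : r ∈ univ) => (hx r).2
    rw [sum_coordsExcept] at this
    linarith
  · obtain ⟨r, rfl⟩ := Fin.exists_succAbove_eq hj
    exact (hx r).1

theorem exists_mem_cornerBox_of_mem_convexHull {N : ℕ} (hn : 0 < n) (hN : n ^ 2 ≤ N + 1)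
    (hnN : n ≤ N) {x : E} (hx : x ∈ convexHull ℝ (Set.range b)) :
    ∃ i, ∃ g ∈ piAntidiag univ (N - n), x ∈ b.cornerBox N i g := by
  rw [b.convexHull_eq_nonneg_coord] at hx
  obtain ⟨i, -, hi⟩ := exists_le_of_sum_le univ_nonempty
    (f := fun _ => ((n : ℝ) + 1)⁻¹) (g := fun j => b.coord j x) (by
      rw [b.sum_coord_apply_eq_one, sum_const, card_univ, Fintype.card_fin, nsmul_eq_mul]
      push_cast
      exact (mul_inv_cancel₀ (by positivity)).le)
  obtain ⟨g, hgsum, hg⟩ := exists_sum_le_sub_and_mul_le_add_one hN hnN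
    (μ := b.coordsExcept i x) (fun r => hx _) (by
      rw [sum_coordsExcept]
      have := (inv_le_iff_one_le_mul₀' (by positivity : (0 : ℝ) < n + 1)).mp hi
      linarith)
  obtain ⟨g', hg', hle⟩ := exists_mem_piAntidiag_univ_le ⟨0, hn⟩ hgsum
  have hNpos : (0 : ℝ) < N := by exact_mod_cast hn.trans_le hnN
  refine ⟨i, g', hg', fun r => ⟨hx _, ?_⟩⟩
  rw [le_div_iff₀ hNpos, mul_comm]
  exact (hg r).trans (by exact_mod_cast Nat.add_le_add_right (hle r) 1)

theorem cornerBox_isParallelepiped (b : AffineBasis (Fin (n + 1)) ℝ (Fin n → ℝ)) {N : ℕ}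
    (hN : 0 < N) (i : Fin (n + 1)) (g : Fin n → ℕ) : IsParallelepiped (b.cornerBox N i g) :=
  isParallelepiped_of_injective _ (b.coordsExcept_injective i) fun _ => by positivity

end AffineBasis

theorem exists_fin_indexed_cover {α ι : Type*} (s : Finset ι) (B : ι → Set α) {S : Set α}
    {P : Set α → Prop} (hP : ∀ p ∈ s, P (B p)) (hBS : ∀ p ∈ s, B p ⊆ S)
    (hS : ∀ x ∈ S, ∃ p ∈ s, x ∈ B p) :
    ∃ B' : Fin #s → Set α, (∀ k, P (B' k)) ∧ (∀ k, B' k ⊆ S) ∧ S = ⋃ k, B' k := by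
  refine ⟨fun k => B (s.equivFin.symm k), fun k => hP _ (s.equivFin.symm k).2,
    fun k => hBS _ (s.equivFin.symm k).2, ?_⟩
  refine (Set.iUnion_subset fun k => hBS _ (s.equivFin.symm k).2).antisymm' fun x hx => ?_
  obtain ⟨p, hp, hxp⟩ := hS x hx
  exact Set.mem_iUnion.mpr ⟨s.equivFin ⟨p, hp⟩, by simpa using hxp⟩

/-- Every `n`-dimensional simplex can be covered by at most `(n+1)·C(n²−2, n−1)`
parallelepipeds contained in it. -/
theorem simplex_covered_by_parallelepipeds {n : ℕ} (hn : 1 ≤ n)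
    (v : Fin (n + 1) → (Fin n → ℝ)) (hv : AffineIndependent ℝ v) :
    ∃ (t : ℕ) (B : Fin t → Set (Fin n → ℝ)),
      t ≤ (n + 1) * Nat.choose (n ^ 2 - 2) (n - 1) ∧
      (∀ i, IsParallelepiped (B i)) ∧
      (∀ i, B i ⊆ convexHull ℝ (Set.range v)) ∧
      convexHull ℝ (Set.range v) = ⋃ i, B i := by
  -- `N = n ^ 2 - 1` except for `n = 1`, where `N = 1` gives the same count
  set N := max (n ^ 2 - 1) n
  have hsq : 2 * n ≤ n ^ 2 + 1 := by nlinarith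
  have hN : n ^ 2 ≤ N + 1 := by omega
  have hnN : n ≤ N := by omega
  let b : AffineBasis (Fin (n + 1)) ℝ (Fin n → ℝ) :=
    ⟨v, hv, hv.affineSpan_eq_top_iff_card_eq_finrank_add_one.mpr (by simp)⟩
  obtain ⟨B, hB, hBS, hcov⟩ := exists_fin_indexed_cover (univ ×ˢ piAntidiag univ (N - n))
    (fun p => b.cornerBox N p.1 p.2) (P := IsParallelepiped)
    (fun _ _ => b.cornerBox_isParallelepiped (by omega) _ _)
    (fun p hp => b.cornerBox_subset_convexHull hnN p.1 (by simpa using (mem_product.mp hp).2))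
    (fun x hx => by
      obtain ⟨i, g, hg, hx⟩ := b.exists_mem_cornerBox_of_mem_convexHull hn hN hnN hx
      exact ⟨(i, g), mem_product.mpr ⟨mem_univ _, hg⟩, hx⟩)
  refine ⟨_, B, le_of_eq ?_, hB, hBS, hcov⟩
  rw [card_product, card_univ, Fintype.card_fin, card_piAntidiag_univ_fin, show n + (N - n) - 1 = n ^ 2 - 2 by omega]
  exact congrArg _ (Nat.choose_symm_of_eq_add (by omega))
end

section
/- Let f be a threshold function on E_kⁿ, K(f) = cone(M₁(f) − M₀(f)), F₀(f) = conv M₀(f) − K(f), F₁(f) = conv M₁(f) + K(f). If x and y are two distinct essential points of f lying both in M₀(f) or both in M₁(f) (i.e., distinct vertices of the same F_ν(f)), then 2x − y ∉ F₀(f) ∪ F₁(f). -/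
/-- `E_kⁿ` viewed as a subset of `ℝⁿ`. -/
def cubePts (n k : ℕ) : Set (Fin n → ℝ) := {x | ∀ j, ∃ m : ℕ, m < k ∧ x j = (m : ℝ)}

/-- The cone hull of a set `X` (the set of nonnegative combinations of elements of `X`,
realized as nonnegative multiples of points of the convex hull). -/
def coneHull {n : ℕ} (X : Set (Fin n → ℝ)) : Set (Fin n → ℝ) :=
  {z | ∃ c : ℝ, 0 ≤ c ∧ ∃ y ∈ convexHull ℝ X, z = c • y}

/-- `M₀(f)` for the threshold function determined by `aᵀx ≤ a₀`. -/
def Mzero (n k : ℕ) (a : Fin n → ℝ) (a₀ : ℝ) : Set (Fin n → ℝ) :=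
  {x ∈ cubePts n k | ∑ j, a j * x j ≤ a₀}

/-- `M₁(f)`. -/
def Mone (n k : ℕ) (a : Fin n → ℝ) (a₀ : ℝ) : Set (Fin n → ℝ) :=
  cubePts n k \ Mzero n k a a₀

/-- `K(f) = cone(M₁(f) − M₀(f))`. -/
def Kcone (n k : ℕ) (a : Fin n → ℝ) (a₀ : ℝ) : Set (Fin n → ℝ) :=
  coneHull {z | ∃ u ∈ Mone n k a a₀, ∃ w ∈ Mzero n k a a₀, z = u - w}

/-- `F₀(f) = conv M₀(f) − K(f)`. -/
def Fzero (n k : ℕ) (a : Fin n → ℝ) (a₀ : ℝ) : Set (Fin n → ℝ) :=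
  {z | ∃ u ∈ convexHull ℝ (Mzero n k a a₀), ∃ w ∈ Kcone n k a a₀, z = u - w}

/-- `F₁(f) = conv M₁(f) + K(f)`. -/
def Fone (n k : ℕ) (a : Fin n → ℝ) (a₀ : ℝ) : Set (Fin n → ℝ) :=
  {z | ∃ u ∈ convexHull ℝ (Mone n k a a₀), ∃ w ∈ Kcone n k a a₀, z = u + w}

theorem add_sub_notMem_of_mem_extremePoints {𝕜 E : Type*} [Ring 𝕜] [LinearOrder 𝕜]
    [IsStrictOrderedRing 𝕜] [Invertible (2 : 𝕜)] [AddCommGroup E] [Module 𝕜 E] {A : Set E}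
    {x y : E} (hx : x ∈ A.extremePoints 𝕜) (hy : y ∈ A) (hxy : x ≠ y) :
    x + (x - y) ∉ A := fun hz ↦ by
  have hseg : x ∈ openSegment 𝕜 y (x + (x - y)) := by
    simpa only [sub_sub_cancel] using mem_openSegment_sub_add (𝕜 := 𝕜) x (x - y)
  exact hxy (hx.2 hy hz hseg).symm

theorem coneHull_add_mem {n : ℕ} {X : Set (Fin n → ℝ)} {p q : Fin n → ℝ}
    (hp : p ∈ coneHull X) (hq : q ∈ coneHull X) : p + q ∈ coneHull X := by
  obtain ⟨c, hc, u, hu, rfl⟩ := hp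
  obtain ⟨d, hd, v, hv, rfl⟩ := hq
  rcases (add_nonneg hc hd).eq_or_lt with hcd | hcd
  · obtain ⟨rfl, rfl⟩ := (add_eq_zero_iff_of_nonneg hc hd).mp hcd.symm
    exact ⟨0, le_rfl, u, hu, by simp⟩
  · refine ⟨c + d, hcd.le, (c / (c + d)) • u + (d / (c + d)) • v,
      convex_convexHull ℝ X hu hv (by positivity) (by positivity) (by field_simp), ?_⟩
    rw [smul_add, smul_smul, smul_smul, mul_div_cancel₀ _ hcd.ne', mul_div_cancel₀ _ hcd.ne']

section ThresholdFunction

open scoped Pointwise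

variable {n k : ℕ} {a : Fin n → ℝ} {a₀ : ℝ}

theorem sub_mem_Kcone {u w : Fin n → ℝ} (hu : u ∈ convexHull ℝ (Mone n k a a₀))
    (hw : w ∈ convexHull ℝ (Mzero n k a a₀)) : u - w ∈ Kcone n k a a₀ := by
  have hdiff : {z | ∃ u ∈ Mone n k a a₀, ∃ w ∈ Mzero n k a a₀, z = u - w}
      = Mone n k a a₀ - Mzero n k a a₀ := by
    ext z
    simp only [Set.mem_ofPred_eq, Set.mem_sub, eq_comm]
  refine ⟨1, zero_le_one, u - w, ?_, (one_smul ℝ _).symm⟩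
  rw [hdiff, convexHull_sub]
  exact Set.sub_mem_sub hu hw

theorem sub_mem_Fzero {z w : Fin n → ℝ} (hz : z ∈ Fzero n k a a₀) (hw : w ∈ Kcone n k a a₀) :
    z - w ∈ Fzero n k a a₀ := by
  obtain ⟨u, hu, v, hv, rfl⟩ := hz
  exact ⟨u, hu, v + w, coneHull_add_mem hv hw, by abel⟩

theorem add_mem_Fone {z w : Fin n → ℝ} (hz : z ∈ Fone n k a a₀) (hw : w ∈ Kcone n k a a₀) :
    z + w ∈ Fone n k a a₀ := by
  obtain ⟨u, hu, v, hv, rfl⟩ := hz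
  exact ⟨u, hu, v + w, coneHull_add_mem hv hw, by abel⟩

theorem sub_mem_Kcone_of_mem_Fone_of_mem_Fzero {z₁ z₀ : Fin n → ℝ} (h₁ : z₁ ∈ Fone n k a a₀)
    (h₀ : z₀ ∈ Fzero n k a a₀) : z₁ - z₀ ∈ Kcone n k a a₀ := by
  obtain ⟨u₁, hu₁, w₁, hw₁, rfl⟩ := h₁
  obtain ⟨u₀, hu₀, w₀, hw₀, rfl⟩ := h₀
  rw [show u₁ + w₁ - (u₀ - w₀) = (u₁ - u₀) + (w₁ + w₀) by abel]
  exact coneHull_add_mem (sub_mem_Kcone hu₁ hu₀) (coneHull_add_mem hw₁ hw₀)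

end ThresholdFunction

theorem reflection_outside_F_general (n k : ℕ) (a : Fin n → ℝ) (a₀ : ℝ)
    (x y : Fin n → ℝ) (hxy : x ≠ y)
    (hvert : (x ∈ Set.extremePoints ℝ (Fzero n k a a₀) ∧
              y ∈ Set.extremePoints ℝ (Fzero n k a a₀)) ∨
             (x ∈ Set.extremePoints ℝ (Fone n k a a₀) ∧
              y ∈ Set.extremePoints ℝ (Fone n k a a₀))) :
    (2 : ℝ) • x - y ∉ Fzero n k a a₀ ∪ Fone n k a a₀ := by
  rw [two_smul, add_sub_assoc]
  -- If `x + (x - y)` lies in the other `F`, then `±(x - y) ∈ K` pushes `y + (y - x)` into this one.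
  have hyx : y - (x - y) = y + (y - x) := by abel
  rintro (hz | hz) <;> rcases hvert with ⟨hx, hy⟩ | ⟨hx, hy⟩
  · exact add_sub_notMem_of_mem_extremePoints hx hy.1 hxy hz
  · have hK : y - x ∈ Kcone n k a a₀ := by
      simpa using sub_mem_Kcone_of_mem_Fone_of_mem_Fzero hx.1 hz
    exact add_sub_notMem_of_mem_extremePoints hy hx.1 hxy.symm (add_mem_Fone hy.1 hK)
  · have hK : x - y ∈ Kcone n k a a₀ := by
      simpa using sub_mem_Kcone_of_mem_Fone_of_mem_Fzero hz hx.1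
    exact add_sub_notMem_of_mem_extremePoints hy hx.1 hxy.symm
      (hyx ▸ sub_mem_Fzero hy.1 hK)
  · exact add_sub_notMem_of_mem_extremePoints hx hy.1 hxy hz

/-- If `x ≠ y` are vertices of the same `F_ν(f)` (equivalently, distinct essential points
of `f` lying in the same `M_ν(f)`), then `2x − y ∉ F₀(f) ∪ F₁(f)`. -/
theorem reflection_outside_F (n k : ℕ) (hk : 2 ≤ k) (a : Fin n → ℝ) (a₀ : ℝ)
    (x y : Fin n → ℝ) (hxy : x ≠ y)
    (hvert : (x ∈ Set.extremePoints ℝ (Fzero n k a a₀) ∧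
              y ∈ Set.extremePoints ℝ (Fzero n k a a₀)) ∨
             (x ∈ Set.extremePoints ℝ (Fone n k a a₀) ∧
              y ∈ Set.extremePoints ℝ (Fone n k a a₀))) :
    (2 : ℝ) • x - y ∉ Fzero n k a a₀ ∪ Fone n k a a₀ :=
  reflection_outside_F_general n k a a₀ x y hxy hvert
end

section
/- Let f be a threshold function on E_kⁿ given by threshold inequality Σⱼ aⱼxⱼ ≤ a₀ with a₁ ≥ a₂ ≥ … ≥ a_n ≥ 0 and a₀ > (k−1)a_n. If the unit vector e_n = (0,…,0,1) does not belong to K(f) = cone(M₁(f) − M₀(f)), then every point x in the minimal teaching set of f satisfies x_n = 0 or x_n = k−1. -/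
/-- `z` is an essential point of the threshold function given by `aᵀx ≤ a₀`: some threshold
function (given by `bᵀx ≤ b₀`) disagrees with it exactly at `z`. -/
def EssentialPt (n k : ℕ) (a : Fin n → ℝ) (a₀ : ℝ) (z : Fin n → ℝ) : Prop :=
  z ∈ cubePts n k ∧
  ∃ (b : Fin n → ℝ) (b₀ : ℝ),
    ¬ ((∑ j, b j * z j ≤ b₀) ↔ (∑ j, a j * z j ≤ a₀)) ∧
    ∀ x ∈ cubePts n k, x ≠ z →
      ((∑ j, b j * x j ≤ b₀) ↔ (∑ j, a j * x j ≤ a₀))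

lemma sum_mul_update {n : ℕ} (b z : Fin n → ℝ) (i : Fin n) (v : ℝ) :
    ∑ j, b j * Function.update z i v j = ∑ j, b j * z j + b i * (v - z i) := by
  classical
  rw [← Finset.sum_erase_add _ _ (Finset.mem_univ i),
      ← Finset.sum_erase_add _ (fun j => b j * z j) (Finset.mem_univ i)]
  have h1 : ∑ j ∈ Finset.univ.erase i, b j * Function.update z i v j
      = ∑ j ∈ Finset.univ.erase i, b j * z j :=
    Finset.sum_congr rfl fun j hj => by
      rw [Function.update_of_ne (Finset.ne_of_mem_erase hj)]
  rw [h1, Function.update_self]; ring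

/-- If `a₁ ≥ … ≥ a_{n+1} ≥ 0`, `a₀ > (k−1)·a_{n+1}` and `e_{n+1} ∉ K(f)`, then every point
of the minimal teaching set (i.e. every essential point) has last coordinate `0` or `k−1`. -/
theorem essential_last_coordinate (n k : ℕ) (hk : 2 ≤ k)
    (a : Fin (n + 1) → ℝ) (a₀ : ℝ)
    (hmono : ∀ i j : Fin (n + 1), i ≤ j → a j ≤ a i)
    (hnn : 0 ≤ a (Fin.last n))
    (ha₀ : ((k : ℝ) - 1) * a (Fin.last n) < a₀)
    (hK : Pi.single (Fin.last n) (1 : ℝ) ∉ Kcone (n + 1) k a a₀)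
    (z : Fin (n + 1) → ℝ) (hz : EssentialPt (n + 1) k a a₀ z) :
    z (Fin.last n) = 0 ∨ z (Fin.last n) = (k : ℝ) - 1 := by
  classical
  by_contra hcon
  push_neg at hcon
  obtain ⟨h0, h1⟩ := hcon
  obtain ⟨hzc, b, b₀, hne, hagree⟩ := hz
  set i := Fin.last n with hi
  obtain ⟨m, hmk, hzm⟩ := hzc i
  have hm0 : m ≠ 0 := by
    intro e; apply h0; rw [hzm, e, Nat.cast_zero]
  have hmk1 : m ≠ k - 1 := by
    intro e; apply h1
    rw [hzm, e, Nat.cast_sub (by omega), Nat.cast_one]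
  have hm1 : 1 ≤ m := Nat.one_le_iff_ne_zero.mpr hm0
  have hm2 : m + 1 < k := by omega
  -- the two neighbours of z in the last coordinate
  set z' := Function.update z i ((m : ℝ) - 1) with hz'
  set z'' := Function.update z i ((m : ℝ) + 1) with hz''
  have hz'c : z' ∈ cubePts (n + 1) k := by
    intro j
    by_cases hji : j = i
    · subst hji
      exact ⟨m - 1, by omega, by
        rw [hz', Function.update_self, Nat.cast_sub hm1, Nat.cast_one]⟩
    · obtain ⟨m', hm', hzm'⟩ := hzc j
      exact ⟨m', hm', by rw [hz', Function.update_of_ne hji, hzm']⟩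
  have hz''c : z'' ∈ cubePts (n + 1) k := by
    intro j
    by_cases hji : j = i
    · subst hji
      exact ⟨m + 1, hm2, by
        rw [hz'', Function.update_self, Nat.cast_add, Nat.cast_one]⟩
    · obtain ⟨m', hm', hzm'⟩ := hzc j
      exact ⟨m', hm', by rw [hz'', Function.update_of_ne hji, hzm']⟩
  have hz'ne : z' ≠ z := by
    intro e
    have := congrFun e i
    rw [hz', Function.update_self, hzm] at this
    linarith
  have hz''ne : z'' ≠ z := by
    intro e
    have := congrFun e i
    rw [hz'', Function.update_self, hzm] at this
    linarith
  -- sums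
  have hsa' : ∑ j, a j * z' j = ∑ j, a j * z j - a i := by
    rw [hz', sum_mul_update, hzm]; ring
  have hsa'' : ∑ j, a j * z'' j = ∑ j, a j * z j + a i := by
    rw [hz'', sum_mul_update, hzm]; ring
  have hsb' : ∑ j, b j * z' j = ∑ j, b j * z j - b i := by
    rw [hz', sum_mul_update, hzm]; ring
  have hsb'' : ∑ j, b j * z'' j = ∑ j, b j * z j + b i := by
    rw [hz'', sum_mul_update, hzm]; ring
  -- membership of u - w in the cone gives a contradiction with hK
  have memK : ∀ u ∈ Mone (n + 1) k a a₀, ∀ w ∈ Mzero (n + 1) k a a₀,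
      u - w = Pi.single i (1 : ℝ) → False := by
    intro u hu w hw he
    exact hK ⟨1, zero_le_one, u - w,
      subset_convexHull ℝ _ ⟨u, hu, w, hw, rfl⟩, by rw [one_smul, he]⟩
  have he1 : z - z' = Pi.single i (1 : ℝ) := by
    funext j
    by_cases hji : j = i
    · subst hji
      simp only [Pi.sub_apply, hz', Function.update_self, Pi.single_eq_same, hzm]
      ring
    · simp only [Pi.sub_apply, hz', Function.update_of_ne hji,
        Pi.single_eq_of_ne hji, sub_self]
  have he2 : z'' - z = Pi.single i (1 : ℝ) := by
    funext j
    by_cases hji : j = i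
    · subst hji
      simp only [Pi.sub_apply, hz'', Function.update_self, Pi.single_eq_same, hzm]
      ring
    · simp only [Pi.sub_apply, hz'', Function.update_of_ne hji,
        Pi.single_eq_of_ne hji, sub_self]
  by_cases hf : ∑ j, a j * z j ≤ a₀
  · -- f(z) = 0, so the disagreeing function has b·z > b₀
    have hbz : ¬ (∑ j, b j * z j ≤ b₀) := fun h => hne (iff_of_true h hf)
    by_cases hf'' : ∑ j, a j * z'' j ≤ a₀
    · -- both neighbours are zero-points of f, hence of g: contradiction
      have h1' : ∑ j, a j * z' j ≤ a₀ := by rw [hsa']; linarith [hf]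
      have hb'' : ∑ j, b j * z'' j ≤ b₀ := (hagree z'' hz''c hz''ne).mpr hf''
      have hb' : ∑ j, b j * z' j ≤ b₀ := (hagree z' hz'c hz'ne).mpr h1'
      rw [hsb''] at hb''
      rw [hsb'] at hb'
      exact hbz (by linarith)
    · -- z'' is a one-point, z a zero-point: e ∈ K
      exact memK z'' ⟨hz''c, fun hmem => hf'' hmem.2⟩ z ⟨hzc, hf⟩ he2
  · -- f(z) = 1, so b·z ≤ b₀
    have hbz : ∑ j, b j * z j ≤ b₀ := by
      by_contra hb
      exact hne (iff_of_false hb hf)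
    by_cases hf' : ∑ j, a j * z' j ≤ a₀
    · -- z is a one-point, z' a zero-point: e ∈ K
      exact memK z ⟨hzc, fun hmem => hf hmem.2⟩ z' ⟨hz'c, hf'⟩ he1
    · -- both neighbours are one-points of f, hence of g: contradiction
      have h1'' : ¬ ∑ j, a j * z'' j ≤ a₀ := by
        rw [hsa'']; push_neg at hf ⊢; linarith
      have hb' : ¬ ∑ j, b j * z' j ≤ b₀ := fun h => hf' ((hagree z' hz'c hz'ne).mp h)
      have hb'' : ¬ ∑ j, b j * z'' j ≤ b₀ := fun h => h1'' ((hagree z'' hz''c hz''ne).mp h)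
      rw [hsb'] at hb'
      rw [hsb''] at hb''
      push_neg at hb' hb''
      linarith
end
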